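/- Let K be a valued field and α : X → Y a C¹ map between open subsets X ⊆ K^m, Y ⊆ K^n such that rv_λ^{(n×m)}(Jac α) is constant on X, |α(x₂) - α(x₁)| = |Jac α|·|x₂ - x₁| for all x₁, x₂ ∈ X, and rv_λ^{(n)}(α(x₂) - α(x₁)) = rv_λ^{(n)}(Jac α(x₁)·(x₂ - x₁)). If f : Y → K is C¹ and f ∘ α satisfies the λ-supremum-Jacobian inequality |f(α(x)) - f(α(y)) - grad(f∘α)(y)·(x - y)| <₀ λ·|grad(f∘α)(y)|·|x - y| on X, then f satisfies |f(u) - f(v) - grad f(v)·(u - v)| <₀ λ·|grad f(v)|·|u - v| for all u, v ∈ α(X). -/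

import Mathlib

/-!
Write `D = α x - α y`, `d = x - y`, `J = Jac α (y)` and `g = grad f (α y)`. The error of `f` splits as
`(f(α x) - f(α y) - (g J)·d) - g·(D - J d)`. The first term is the error of `f ∘ α`, bounded by
`λ |g J| |d| ≤ λ |g| |J| |d| = λ |g| |D|`; the second is at most `|g| |D - J d| <₀ λ |g| |D|` by the
first-order exactness of `α`. The ultrametric inequality combines the two bounds.
-/

/-- `0` is a bottom element in a linearly ordered commutative group with zero. -/
local instance orderBotOfLinearOrderedCommGroupWithZero
    {Γ : Type*} [LinearOrderedCommGroupWithZero Γ] : OrderBot Γ where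
  bot := 0
  bot_le _ := zero_le'

/-- The maximum norm on `K^ι` induced by a valuation. -/
def vsup {K Γ : Type*} [Field K] [LinearOrderedCommGroupWithZero Γ]
    (v : Valuation K Γ) {ι : Type*} [Fintype ι] (x : ι → K) : Γ :=
  Finset.univ.sup fun i => v (x i)

/-- The maximum norm on matrices induced by a valuation. -/
def vsupM {K Γ : Type*} [Field K] [LinearOrderedCommGroupWithZero Γ]
    (v : Valuation K Γ) {ι κ : Type*} [Fintype ι] [Fintype κ] (M : Matrix ι κ K) : Γ :=
  Finset.univ.sup fun i => vsup v (M i)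

/-- `a <₀ b`: `a < b`, or `a = b = 0`. -/
def lt0 {Γ : Type*} [LinearOrderedCommGroupWithZero Γ] (a b : Γ) : Prop :=
  a < b ∨ (a = 0 ∧ b = 0)

open scoped Matrix

section lt0

variable {Γ : Type*} [LinearOrderedCommGroupWithZero Γ] {a b c : Γ}

lemma lt0_zero_left (b : Γ) : lt0 0 b :=
  (zero_le (a := b)).lt_or_eq.imp id fun h => ⟨rfl, h.symm⟩

lemma lt0_of_le_of_lt0 (hab : a ≤ b) (hbc : lt0 b c) : lt0 a c := by
  rcases hbc with hbc | ⟨rfl, rfl⟩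
  · exact Or.inl (hab.trans_lt hbc)
  · exact Or.inr ⟨le_antisymm hab zero_le, rfl⟩

lemma lt0_of_lt0_of_le (hab : lt0 a b) (hbc : b ≤ c) : lt0 a c := by
  rcases hab with hab | ⟨rfl, rfl⟩
  · exact Or.inl (hab.trans_le hbc)
  · exact lt0_zero_left c

lemma lt0_max (ha : lt0 a c) (hb : lt0 b c) : lt0 (max a b) c := by
  rcases le_total a b with h | h
  · rwa [max_eq_right h]
  · rwa [max_eq_left h]

lemma lt0_mul_left (a : Γ) (hbc : lt0 b c) : lt0 (a * b) (a * c) := by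
  rcases eq_or_ne a 0 with rfl | ha
  · simpa using lt0_zero_left (0 : Γ)
  rcases hbc with hbc | ⟨rfl, rfl⟩
  · exact Or.inl (mul_lt_mul_of_pos_left hbc (zero_lt_iff.mpr ha))
  · simpa using lt0_zero_left (0 : Γ)

end lt0

section vsup

variable {K Γ : Type*} [Field K] [LinearOrderedCommGroupWithZero Γ] (v : Valuation K Γ)
  {ι κ : Type*} [Fintype ι] [Fintype κ]

lemma le_vsup (x : ι → K) (i : ι) : v (x i) ≤ vsup v x :=
  Finset.le_sup (f := fun i => v (x i)) (Finset.mem_univ i)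

lemma vsup_zero : vsup v (0 : ι → K) = 0 := by
  simp only [vsup, Pi.zero_apply, map_zero]
  exact Finset.sup_bot _

lemma le_vsupM (M : Matrix ι κ K) (i : ι) (j : κ) : v (M i j) ≤ vsupM v M :=
  (le_vsup v (M i) j).trans (Finset.le_sup (f := fun i => vsup v (M i)) (Finset.mem_univ i))

lemma Valuation.map_dotProduct_le (g w : ι → K) : v (g ⬝ᵥ w) ≤ vsup v g * vsup v w :=
  v.map_sum_le fun i _ => (v.map_mul _ _).trans_le (mul_le_mul' (le_vsup v g i) (le_vsup v w i))

lemma vsup_vecMul_le (g : ι → K) (M : Matrix ι κ K) :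
    vsup v (g ᵥ* M) ≤ vsup v g * vsupM v M :=
  Finset.sup_le fun j _ => v.map_sum_le fun i _ =>
    (v.map_mul _ _).trans_le (mul_le_mul' (le_vsup v g i) (le_vsupM v M i j))

lemma lt0_vsup_sub_mulVec {D : ι → K} {M : Matrix ι κ K} {d : κ → K} (lam : Γ)
    (h : D = M *ᵥ d ∨ vsup v (D - M *ᵥ d) < lam * vsup v D) :
    lt0 (vsup v (D - M *ᵥ d)) (lam * vsup v D) := by
  rcases h with h | h
  · rw [h, sub_self, vsup_zero]
    exact lt0_zero_left _
  · exact Or.inl h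

lemma lt0_sub_dotProduct_of_lt0_sub_vecMul {lam : Γ} {F : K} {g : ι → K} {J : Matrix ι κ K}
    {D : ι → K} {d : κ → K} (hD : vsup v D = vsupM v J * vsup v d)
    (hlin : lt0 (vsup v (D - J *ᵥ d)) (lam * vsup v D))
    (hcomp : lt0 (v (F - (g ᵥ* J) ⬝ᵥ d)) (lam * vsup v (g ᵥ* J) * vsup v d)) :
    lt0 (v (F - g ⬝ᵥ D)) (lam * vsup v g * vsup v D) := by
  have hsplit : F - g ⬝ᵥ D = (F - (g ᵥ* J) ⬝ᵥ d) - g ⬝ᵥ (D - J *ᵥ d) := by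
    rw [dotProduct_sub, ← Matrix.dotProduct_mulVec]
    ring
  have hcomp' : lt0 (v (F - (g ᵥ* J) ⬝ᵥ d)) (lam * vsup v g * vsup v D) := by
    refine lt0_of_lt0_of_le hcomp ?_
    rw [hD, mul_assoc, mul_assoc, ← mul_assoc (vsup v g)]
    exact mul_le_mul_right (mul_le_mul_left (vsup_vecMul_le v g J) _) lam
  have hlin' : lt0 (v (g ⬝ᵥ (D - J *ᵥ d))) (lam * vsup v g * vsup v D) := by
    refine lt0_of_le_of_lt0 (v.map_dotProduct_le g _) ?_
    rw [mul_comm lam, mul_assoc]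
    exact lt0_mul_left _ hlin
  rw [hsplit]
  exact lt0_of_le_of_lt0 (v.map_sub _ _) (lt0_max hcomp' hlin')

end vsup

theorem supJac_transfer_general {K Γ : Type*} [Field K] [LinearOrderedCommGroupWithZero Γ]
    (v : Valuation K Γ) {m n : ℕ} (lam : Γ)
    (X : Set (Fin m → K)) (α : (Fin m → K) → Fin n → K)
    (Jacα : (Fin m → K) → Matrix (Fin n) (Fin m) K)
    (f : (Fin n → K) → K) (gradf : (Fin n → K) → Fin n → K)
    (hα1 : ∀ x₁ ∈ X, ∀ x₂ ∈ X,
      vsup v (α x₂ - α x₁) = vsupM v (Jacα x₁) * vsup v (x₂ - x₁))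
    (hα2 : ∀ x₁ ∈ X, ∀ x₂ ∈ X,
      α x₂ - α x₁ = (Jacα x₁).mulVec (x₂ - x₁) ∨
        vsup v ((α x₂ - α x₁) - (Jacα x₁).mulVec (x₂ - x₁)) <
          lam * vsup v (α x₂ - α x₁))
    (hcomp : ∀ x ∈ X, ∀ y ∈ X,
      lt0 (v (f (α x) - f (α y) -
          ∑ j, Matrix.vecMul (gradf (α y)) (Jacα y) j * (x j - y j)))
        (lam * vsup v (Matrix.vecMul (gradf (α y)) (Jacα y)) * vsup v (x - y))) :
    ∀ x ∈ X, ∀ y ∈ X,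
      lt0 (v (f (α x) - f (α y) - ∑ i, gradf (α y) i * (α x i - α y i)))
        (lam * vsup v (gradf (α y)) * vsup v (α x - α y)) := fun x hx y hy =>
  lt0_sub_dotProduct_of_lt0_sub_vecMul v (hα1 y hy x hx)
    (lt0_vsup_sub_mulVec v lam (hα2 y hy x hx)) (hcomp x hx y hy)

/-- Preservation of the λ-supremum-Jacobian inequality under a norm-preserving
reparametrization `α` (with `rv_λ`-constant Jacobian, exact norm scaling, and `rv_λ`-exact
first-order behaviour): if `f ∘ α` satisfies the λ-sup-Jacobian inequality on `X` (with its
gradient given by the chain rule `grad (f∘α) y = grad f (α y) · Jac α y`), then `f`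
satisfies the λ-sup-Jacobian inequality on `α(X)`. -/
theorem supJac_transfer {K Γ : Type*} [Field K] [LinearOrderedCommGroupWithZero Γ]
    (v : Valuation K Γ) {m n : ℕ} (lam : Γ) (hlam0 : 0 < lam) (hlam1 : lam ≤ 1)
    (X : Set (Fin m → K)) (α : (Fin m → K) → Fin n → K)
    (Jacα : (Fin m → K) → Matrix (Fin n) (Fin m) K)
    (f : (Fin n → K) → K) (gradf : (Fin n → K) → Fin n → K)
    (hJacConst : ∀ x₁ ∈ X, ∀ x₂ ∈ X, Jacα x₁ = Jacα x₂ ∨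
      vsupM v (Jacα x₁ - Jacα x₂) < lam * vsupM v (Jacα x₁))
    (hα1 : ∀ x₁ ∈ X, ∀ x₂ ∈ X,
      vsup v (α x₂ - α x₁) = vsupM v (Jacα x₁) * vsup v (x₂ - x₁))
    (hα2 : ∀ x₁ ∈ X, ∀ x₂ ∈ X,
      α x₂ - α x₁ = (Jacα x₁).mulVec (x₂ - x₁) ∨
        vsup v ((α x₂ - α x₁) - (Jacα x₁).mulVec (x₂ - x₁)) <
          lam * vsup v (α x₂ - α x₁))
    (hcomp : ∀ x ∈ X, ∀ y ∈ X,
      lt0 (v (f (α x) - f (α y) -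
          ∑ j, Matrix.vecMul (gradf (α y)) (Jacα y) j * (x j - y j)))
        (lam * vsup v (Matrix.vecMul (gradf (α y)) (Jacα y)) * vsup v (x - y))) :
    ∀ x ∈ X, ∀ y ∈ X,
      lt0 (v (f (α x) - f (α y) - ∑ i, gradf (α y) i * (α x i - α y i)))
        (lam * vsup v (gradf (α y)) * vsup v (α x - α y)) :=
  supJac_transfer_general v lam X α Jacα f gradf hα1 hα2 hcomp
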